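/- Let m be a positive integer and t ∈ [0,1). For s ∈ ℝ and g : ℕ₊ → ℂ set ‖g‖_s := (Σ_{k≥1} k^{2s/m}·|g_k|²)^{1/2}. Let τ = (τ_{jk})_{j,k≥1} be a complex matrix whose associated linear map (τg)_j := Σ_{k≥1} τ_{jk}·g_k satisfies ‖τg‖_{1/2} ≤ A·‖g‖_{1/2+t} and ‖τg‖_{3/2−t} ≤ B·‖g‖_{3/2} for all g, for some finite constants A, B ≥ 0. For N ∈ ℕ₊ let T_N(τ) be the truncated matrix with entries (T_N(τ))_{jk} = τ_{jk} if both j ≤ N and k ≤ N, and 0 otherwise. Then for every f : ℕ₊ → ℂ with ‖f‖_{3/2} < ∞, ‖(τ − T_N(τ))f‖_{1/2} ≤ N^{−(1−t)/m}·(A² + B²)^{1/2}·‖f‖_{3/2}. -/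

import Mathlib

open scoped ENNReal

/-- The weighted ℓ²-norm `‖g‖ₛ = (Σ_{k≥1} k^{2s/m} |g_k|²)^{1/2}`, valued in `ℝ≥0∞`. -/
noncomputable def wnormP (m : ℕ) (s : ℝ) (g : ℕ+ → ℂ) : ℝ≥0∞ :=
  (∑' k : ℕ+, ENNReal.ofReal ((k : ℝ) ^ (2*s/(m:ℝ)) * ‖g k‖^2)) ^ (1/2 : ℝ)

/-- The linear map associated to the matrix `τ`: `(τ g)_j := Σ_k τ_{jk} g_k`. -/
noncomputable def matApply (τ : ℕ+ → ℕ+ → ℂ) (g : ℕ+ → ℂ) : ℕ+ → ℂ :=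
  fun j => ∑' k : ℕ+, τ j k * g k

/-- The truncated matrix `T_N(τ)`. -/
def truncMat (N : ℕ+) (τ : ℕ+ → ℕ+ → ℂ) : ℕ+ → ℕ+ → ℂ :=
  fun j k => if j ≤ N ∧ k ≤ N then τ j k else 0

/-!
Split `f` at frequency `N`. On the rows `j ≤ N` the matrix `τ - T_N(τ)` acts as `τ` applied to the
high-frequency part `f_{>N}`, so these rows are bounded by `A ‖f_{>N}‖_{1/2+t}`; on the rows `j > N`
it acts as `τ`, and the `1/2`-norm over those rows is bounded by the `(3/2-t)`-norm, hence by
`B ‖f‖_{3/2}`. In both cases the gain `N^{-(1-t)/m}` comes from `k^{a/m} ≤ N^{(a-b)/m} k^{b/m}`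
for `k > N` and `a ≤ b`; adding the squares gives the estimate.

The series defining `τ f` have to converge for the splitting to be valid: testing the bound `A`
on a row of `τ` shows that every row is in the dual weighted space.
-/

open ENNReal ComplexConjugate

lemma wnormP_sq (m : ℕ) (s : ℝ) (g : ℕ+ → ℂ) :
    wnormP m s g ^ 2 = ∑' k : ℕ+, ENNReal.ofReal ((k : ℝ) ^ (2 * s / m) * ‖g k‖ ^ 2) := by
  rw [wnormP, ← ENNReal.rpow_mul_natCast]
  norm_num

@[simp]
lemma wnormP_zero (m : ℕ) (s : ℝ) : wnormP m s 0 = 0 := by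
  simp [wnormP]

lemma summable_of_wnormP_ne_top {m : ℕ} {s s' : ℝ} (hss' : s ≤ s') {f : ℕ+ → ℂ}
    (hf : wnormP m s' f ≠ ⊤) : Summable fun k : ℕ+ => (k : ℝ) ^ (2 * s / m) * ‖f k‖ ^ 2 := by
  have hsum : Summable fun k : ℕ+ => (k : ℝ) ^ (2 * s' / m) * ‖f k‖ ^ 2 := by
    refine (ENNReal.summable_toReal ?_).congr fun k => ENNReal.toReal_ofReal (by positivity)
    rw [← wnormP_sq]
    exact pow_ne_top hf
  refine hsum.of_nonneg_of_le (fun k => by positivity) fun k => ?_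
  gcongr
  exact_mod_cast k.pos

lemma Real.rpow_le_rpow_sub_mul_rpow {N x a b : ℝ} (hN : 0 < N) (hNx : N ≤ x) (hab : a ≤ b) :
    x ^ a ≤ N ^ (a - b) * x ^ b := by
  have hx : 0 < x := hN.trans_le hNx
  calc x ^ a = x ^ (a - b) * x ^ b := by rw [← Real.rpow_add hx, sub_add_cancel]
    _ ≤ N ^ (a - b) * x ^ b :=
      mul_le_mul_of_nonneg_right (Real.rpow_le_rpow_of_nonpos hN hNx (sub_nonpos.2 hab))
        (Real.rpow_nonneg hx.le b)

lemma wnormP_ite_sq_le {m : ℕ} {s s' : ℝ} (hss' : s ≤ s') (N : ℕ+) (u v : ℕ+ → ℂ) :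
    wnormP m s (fun j => if j ≤ N then u j else v j) ^ 2
      ≤ wnormP m s u ^ 2 + ENNReal.ofReal ((N : ℝ) ^ (2 * (s - s') / m)) * wnormP m s' v ^ 2 := by
  simp only [wnormP_sq, ← ENNReal.tsum_mul_left, ← ENNReal.tsum_add]
  refine ENNReal.tsum_le_tsum fun j => ?_
  split_ifs with hj
  · exact le_self_add
  · refine le_add_left ?_
    rw [← ENNReal.ofReal_mul (by positivity), ← mul_assoc, mul_sub, sub_div]
    gcongr
    exact Real.rpow_le_rpow_sub_mul_rpow (by positivity) (by exact_mod_cast (not_le.mp hj).le)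
      (by gcongr)

lemma summable_mul_of_summable_sq_div {ι R : Type*} [NormedRing R] [CompleteSpace R]
    {a b : ι → R} {w : ι → ℝ} (hw : ∀ i, 0 < w i) (ha : Summable fun i => ‖a i‖ ^ 2 / w i)
    (hb : Summable fun i => w i * ‖b i‖ ^ 2) : Summable fun i => a i * b i := by
  refine Summable.of_norm_bounded ((ha.add hb).div_const 2) fun i => ?_
  have hamgm : 2 * (‖a i‖ * ‖b i‖) ≤ ‖a i‖ ^ 2 / w i + w i * ‖b i‖ ^ 2 := by
    rw [div_add' _ _ _ (hw i).ne', le_div_iff₀ (hw i)]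
    nlinarith [sq_nonneg (‖a i‖ - w i * ‖b i‖)]
  calc ‖a i * b i‖ ≤ ‖a i‖ * ‖b i‖ := norm_mul_le _ _
    _ ≤ _ := by linarith

lemma summable_row_div_rpow {m : ℕ} {s₁ s₂ : ℝ} (hs₁ : 0 ≤ s₁) {τ : ℕ+ → ℕ+ → ℂ} {C : ℝ≥0∞}
    (hC : C ≠ ⊤) (hτ : ∀ g, wnormP m s₁ (matApply τ g) ≤ C * wnormP m s₂ g) (j : ℕ+) :
    Summable fun k : ℕ+ => ‖τ j k‖ ^ 2 / (k : ℝ) ^ (2 * s₂ / m) := by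
  refine summable_of_sum_le (c := (C ^ 2).toReal) (fun k => by positivity) fun F => ?_
  set S := ∑ k ∈ F, ‖τ j k‖ ^ 2 / (k : ℝ) ^ (2 * s₂ / m)
  -- `g` is the conjugate of the `j`-th row, reweighted and cut to `F`; `(τ g)_j = ‖g‖²_{s₂} = S`.
  set g : ℕ+ → ℂ := fun k => if k ∈ F then conj (τ j k) / ((k : ℝ) ^ (2 * s₂ / m) : ℝ) else 0
  have hg0 : ∀ k ∉ F, g k = 0 := fun k hk => if_neg hk
  have hτg : matApply τ g j = S := by
    rw [matApply, tsum_eq_sum fun k hk => by rw [hg0 k hk, mul_zero]]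
    simp only [S]
    push_cast
    refine Finset.sum_congr rfl fun k hk => ?_
    simp only [g, if_pos hk]
    rw [mul_div_assoc', Complex.mul_conj']
  have hg : wnormP m s₂ g ^ 2 = ENNReal.ofReal S := by
    rw [wnormP_sq, tsum_eq_sum fun k hk => by rw [hg0 k hk, norm_zero]; simp,
      ENNReal.ofReal_sum_of_nonneg fun k _ => by positivity]
    refine Finset.sum_congr rfl fun k hk => ?_
    have hk0 : (0 : ℝ) < (k : ℝ) ^ (2 * s₂ / m) := by positivity
    simp only [g, if_pos hk]
    rw [norm_div, Complex.norm_real, Complex.norm_conj, Real.norm_of_nonneg hk0.le]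
    congr 1
    field_simp
  have hS : ENNReal.ofReal S ^ 2 ≤ C ^ 2 * ENNReal.ofReal S := by
    calc ENNReal.ofReal S ^ 2
          ≤ ENNReal.ofReal ((j : ℝ) ^ (2 * s₁ / m) * ‖matApply τ g j‖ ^ 2) := by
          rw [hτg, Complex.norm_real, Real.norm_eq_abs, sq_abs, ← ENNReal.ofReal_pow (by positivity)]
          gcongr
          refine le_mul_of_one_le_left (sq_nonneg S) (Real.one_le_rpow ?_ (by positivity))
          exact_mod_cast j.pos
      _ ≤ wnormP m s₁ (matApply τ g) ^ 2 := wnormP_sq m s₁ _ ▸ ENNReal.le_tsum j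
      _ ≤ (C * wnormP m s₂ g) ^ 2 := pow_le_pow_left₀ (by positivity) (hτ g) 2
      _ = C ^ 2 * ENNReal.ofReal S := by rw [mul_pow, hg]
  have hSC : ENNReal.ofReal S ≤ C ^ 2 := by
    rcases eq_or_ne (ENNReal.ofReal S) 0 with h0 | h0
    · simp [h0]
    · rw [sq] at hS
      exact (ENNReal.mul_le_mul_iff_left h0 ofReal_ne_top).1 hS
  exact (ENNReal.ofReal_le_iff_le_toReal (pow_ne_top hC)).1 hSC

lemma summable_mul_of_wnormP_ne_top {m : ℕ} {s₁ s₂ s : ℝ} (hs₁ : 0 ≤ s₁) (hs₂ : s₂ ≤ s)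
    {τ : ℕ+ → ℕ+ → ℂ} {C : ℝ≥0∞} (hC : C ≠ ⊤)
    (hτ : ∀ g, wnormP m s₁ (matApply τ g) ≤ C * wnormP m s₂ g) {f : ℕ+ → ℂ}
    (hf : wnormP m s f ≠ ⊤) (j : ℕ+) : Summable fun k => τ j k * f k :=
  summable_mul_of_summable_sq_div (fun k => by positivity) (summable_row_div_rpow hs₁ hC hτ j)
    (summable_of_wnormP_ne_top hs₂ hf)

def highPart (N : ℕ+) (f : ℕ+ → ℂ) : ℕ+ → ℂ := fun k => if k ≤ N then 0 else f k

lemma wnormP_highPart_sq_le {m : ℕ} {s s' : ℝ} (hss' : s ≤ s') (N : ℕ+) (f : ℕ+ → ℂ) :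
    wnormP m s (highPart N f) ^ 2
      ≤ ENNReal.ofReal ((N : ℝ) ^ (2 * (s - s') / m)) * wnormP m s' f ^ 2 := by
  have h := wnormP_ite_sq_le (m := m) hss' N 0 f
  rwa [wnormP_zero, zero_pow two_ne_zero, zero_add] at h

lemma matApply_sub_matApply_truncMat_of_le {N j : ℕ+} (hj : j ≤ N) {τ : ℕ+ → ℕ+ → ℂ}
    {f : ℕ+ → ℂ} (hs : Summable fun k => τ j k * f k) :
    matApply τ f j - matApply (truncMat N τ) f j = matApply τ (highPart N f) j := by
  have hlow : Summable fun k => truncMat N τ j k * f k :=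
    summable_of_ne_finset_zero (s := Finset.Iic N) fun k hk => by
      simp_all [truncMat]
  have hhigh : (fun k => τ j k * highPart N f k)
      = fun k => τ j k * f k - truncMat N τ j k * f k := by
    funext k
    by_cases hk : k ≤ N <;> simp [highPart, truncMat, hj, hk]
  rw [matApply, matApply, matApply, hhigh, hs.tsum_sub hlow]

lemma matApply_sub_matApply_truncMat {N : ℕ+} {τ : ℕ+ → ℕ+ → ℂ} {f : ℕ+ → ℂ}
    (hs : ∀ j, Summable fun k => τ j k * f k) :
    (fun j => matApply τ f j - matApply (truncMat N τ) f j)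
      = fun j => if j ≤ N then matApply τ (highPart N f) j else matApply τ f j := by
  funext j
  split_ifs with hj
  · exact matApply_sub_matApply_truncMat_of_le hj (hs j)
  · simp [matApply, truncMat, hj]

lemma ofReal_sq_add_ofReal_sq_le (a b : ℝ) :
    ENNReal.ofReal a ^ 2 + ENNReal.ofReal b ^ 2 ≤ ENNReal.ofReal √(a ^ 2 + b ^ 2) ^ 2 := by
  have hsq (x : ℝ) : ENNReal.ofReal x ^ 2 ≤ ENNReal.ofReal (x ^ 2) := by
    calc ENNReal.ofReal x ^ 2 ≤ ENNReal.ofReal |x| ^ 2 := by gcongr; exact le_abs_self x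
      _ = ENNReal.ofReal (x ^ 2) := by rw [← ENNReal.ofReal_pow (abs_nonneg x), sq_abs]
  rw [← ENNReal.ofReal_pow (Real.sqrt_nonneg _), Real.sq_sqrt (by positivity),
    ENNReal.ofReal_add (sq_nonneg a) (sq_nonneg b)]
  exact add_le_add (hsq a) (hsq b)

theorem stmt9_general (m : ℕ) (t : ℝ) (ht1 : t < 1)
    (τ : ℕ+ → ℕ+ → ℂ) (A B : ℝ)
    (hA : ∀ g : ℕ+ → ℂ, wnormP m (1/2) (matApply τ g) ≤ ENNReal.ofReal A * wnormP m (1/2 + t) g)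
    (hB : ∀ g : ℕ+ → ℂ, wnormP m (3/2 - t) (matApply τ g) ≤ ENNReal.ofReal B * wnormP m (3/2) g)
    (N : ℕ+) :
    ∀ f : ℕ+ → ℂ, wnormP m (3/2) f < ⊤ →
      wnormP m (1/2) (fun j => matApply τ f j - matApply (truncMat N τ) f j)
        ≤ ENNReal.ofReal ((N : ℝ) ^ (-(1 - t)/(m:ℝ)) * Real.sqrt (A^2 + B^2))
          * wnormP m (3/2) f := by
  intro f hf
  set C := ENNReal.ofReal ((N : ℝ) ^ (2 * (1/2 - (3/2 - t)) / m))
  have hC : C = ENNReal.ofReal ((N : ℝ) ^ (-(1 - t) / m)) ^ 2 := by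
    simp only [C]
    rw [← ENNReal.ofReal_pow (by positivity), ← Real.rpow_mul_natCast (by positivity)]
    congr 2
    ring
  have hsum := summable_mul_of_wnormP_ne_top (by norm_num) (by linarith) ofReal_ne_top hA hf.ne
  have hsplit := wnormP_ite_sq_le (m := m) (by linarith : (1/2 : ℝ) ≤ 3/2 - t) N
    (matApply τ (highPart N f)) (matApply τ f)
  have hhigh : wnormP m (1/2 + t) (highPart N f) ^ 2 ≤ C * wnormP m (3/2) f ^ 2 := by
    convert wnormP_highPart_sq_le (m := m) (by linarith : 1/2 + t ≤ 3/2) N f using 6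
    ring
  have hA2 := pow_le_pow_left₀ (by positivity) (hA (highPart N f)) 2
  have hB2 := pow_le_pow_left₀ (by positivity) (hB f) 2
  rw [mul_pow] at hA2 hB2
  rw [matApply_sub_matApply_truncMat hsum, ← ENNReal.pow_le_pow_left_iff two_ne_zero, mul_pow,
    ENNReal.ofReal_mul (by positivity), mul_pow, ← hC]
  calc _ ≤ ENNReal.ofReal A ^ 2 * (C * wnormP m (3/2) f ^ 2)
        + C * (ENNReal.ofReal B ^ 2 * wnormP m (3/2) f ^ 2) := by
        refine hsplit.trans (add_le_add (hA2.trans ?_) ?_)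
        · exact mul_le_mul_right hhigh _
        · exact mul_le_mul_right hB2 _
    _ = C * (ENNReal.ofReal A ^ 2 + ENNReal.ofReal B ^ 2) * wnormP m (3/2) f ^ 2 := by ring
    _ ≤ _ := by gcongr; exact ofReal_sq_add_ofReal_sq_le A B

theorem stmt9 (m : ℕ) (hm : 0 < m) (t : ℝ) (ht0 : 0 ≤ t) (ht1 : t < 1)
    (τ : ℕ+ → ℕ+ → ℂ) (A B : ℝ) (hA0 : 0 ≤ A) (hB0 : 0 ≤ B)
    (hA : ∀ g : ℕ+ → ℂ, wnormP m (1/2) (matApply τ g) ≤ ENNReal.ofReal A * wnormP m (1/2 + t) g)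
    (hB : ∀ g : ℕ+ → ℂ, wnormP m (3/2 - t) (matApply τ g) ≤ ENNReal.ofReal B * wnormP m (3/2) g)
    (N : ℕ+) :
    ∀ f : ℕ+ → ℂ, wnormP m (3/2) f < ⊤ →
      wnormP m (1/2) (fun j => matApply τ f j - matApply (truncMat N τ) f j)
        ≤ ENNReal.ofReal ((N : ℝ) ^ (-(1 - t)/(m:ℝ)) * Real.sqrt (A^2 + B^2))
          * wnormP m (3/2) f :=
  stmt9_general m t ht1 τ A B hA hB N
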